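/- arXiv:1411.2293 — 4 statements merged into one kernel-verified Lean document; each statement's English description precedes it below -/
import Mathlib

section
/- For every even integer k ≥ 2, the limit as X → ∞ of the finite sums (−1)^{k/2} π^{−2k} Σ ∏_{i=1}^k d(|n_i|)/n_i exists, where the sum ranges over k-tuples of nonzero integers n_1, …, n_k with |n_i| ≤ X for all i and n_1 + ⋯ + n_k = 0. (This limit is denoted H_k.) -/
open Finset Filter

/-- The truncated diagonal sum
`(-1)^(k/2) π^(-2k) ∑_{n₁,…,n_k ∈ [-X,X]∖{0}, n₁+⋯+n_k=0} ∏ d(|nᵢ|)/nᵢ`. -/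
noncomputable def momentSum (k X : ℕ) : ℝ :=
  (-1 : ℝ) ^ (k / 2) / Real.pi ^ (2 * k) *
    ∑ n ∈ Fintype.piFinset (fun _ : Fin k => Finset.Icc (-(X : ℤ)) (X : ℤ)),
      if (∀ i, n i ≠ 0) ∧ (∑ i, n i) = 0 then
        ∏ i, (((n i).natAbs.divisors.card : ℝ) / ((n i : ℝ)))
      else 0

/-!
On the hyperplane `n₁ + ⋯ + n_k = 0` the summand is absolutely summable. If `|n_j|` is the largest
coordinate, then `d(|n_j|) / |n_j| ≤ 2 |n_j|^(-1/2) ≤ 2 ∏_{i ≠ j} |n_i|^(-δ)` with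
`δ = 1 / (2 (k - 1))`, so the summand is dominated by `2 ∏_{i ≠ j} d(|n_i|) / |n_i|^(1 + δ)`.
On the hyperplane `n_j` is determined by the other coordinates, and `∑ d(n) n^(-s) = ζ(s)²`
converges for `s > 1`; hence each of the `k` majorants is summable. The boxes `[-X, X]^k`
exhaust `ℤ^k`, so the truncated sums converge to the sum of the series.
-/

theorem Nat.card_divisors_le_two_mul_sqrt (n : ℕ) : (#n.divisors : ℝ) ≤ 2 * √n := by
  set s := n.sqrt
  -- a divisor exceeding `√n` is paired with the cofactor `n / d ≤ √n`
  have hsub : n.divisors ⊆ Icc 1 s ∪ (Icc 1 s).image (n / ·) := by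
    intro d hd
    obtain ⟨hdvd, hn⟩ := Nat.mem_divisors.1 hd
    have hd0 := Nat.pos_of_mem_divisors hd
    rcases le_or_gt d s with hds | hds
    · exact mem_union_left _ (mem_Icc.2 ⟨hd0, hds⟩)
    · refine mem_union_right _ (mem_image.2 ⟨n / d, mem_Icc.2 ⟨?_, ?_⟩, Nat.div_div_self hdvd hn⟩)
      · exact Nat.div_pos (Nat.le_of_dvd (Nat.pos_of_ne_zero hn) hdvd) hd0
      · rw [← Nat.lt_succ_iff, Nat.div_lt_iff_lt_mul hd0]
        exact (Nat.lt_succ_sqrt n).trans_le (Nat.mul_le_mul_left _ hds)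
  have hcard : #n.divisors ≤ 2 * s :=
    calc #n.divisors ≤ #(Icc 1 s) + #((Icc 1 s).image (n / ·)) :=
          (card_le_card hsub).trans (card_union_le _ _)
      _ ≤ 2 * s := by grw [Finset.card_image_le]; simp; omega
  calc (#n.divisors : ℝ) ≤ 2 * s := by exact_mod_cast hcard
    _ ≤ 2 * √n := by grw [Real.nat_sqrt_le_real_sqrt]

theorem Nat.card_divisors_div_le_two_mul_rpow (n : ℕ) :
    (#n.divisors : ℝ) / n ≤ 2 * (n : ℝ) ^ (-(1 / 2) : ℝ) := by
  calc (#n.divisors : ℝ) / n ≤ 2 * √n / n := by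
        gcongr; exact Nat.card_divisors_le_two_mul_sqrt n
    _ = 2 * (n : ℝ) ^ (-(1 / 2) : ℝ) := by
        rw [mul_div_assoc, Real.sqrt_div_self', Real.rpow_neg (Nat.cast_nonneg n),
          ← Real.sqrt_eq_rpow, one_div]

open ArithmeticFunction in
open scoped ArithmeticFunction.zeta ArithmeticFunction.sigma in
theorem summable_card_divisors_div_rpow {s : ℝ} (hs : 1 < s) :
    Summable fun n : ℕ => (#n.divisors : ℝ) / (n : ℝ) ^ s := by
  have hζ : LSeriesSummable (fun n => (ζ : ArithmeticFunction ℂ) n) s :=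
    LSeriesSummable_zeta_iff.2 (by simpa using hs)
  have hζζ : (ζ * ζ : ArithmeticFunction ℕ) = σ 0 := by
    rw [← zeta_mul_pow_eq_sigma, pow_zero_eq_zeta]
  refine (LSeriesSummable_mul hζ hζ).norm.congr fun n => ?_
  rcases eq_or_ne n 0 with rfl | hn
  · simp
  · rw [LSeries.norm_term_eq, if_neg hn, ← natCoe_mul, hζζ, natCoe_apply, sigma_zero_apply]
    simp

noncomputable def divisorWeight (δ : ℝ) (m : ℤ) : ℝ :=
  (#m.natAbs.divisors : ℝ) / |(m : ℝ)| ^ (1 + δ)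

theorem divisorWeight_nonneg (δ : ℝ) (m : ℤ) : 0 ≤ divisorWeight δ m := by
  unfold divisorWeight; positivity

theorem summable_divisorWeight {δ : ℝ} (hδ : 0 < δ) : Summable (divisorWeight δ) := by
  have h := summable_card_divisors_div_rpow (s := 1 + δ) (by linarith)
  exact .of_nat_of_neg (h.congr fun n => by simp [divisorWeight])
    (h.congr fun n => by simp [divisorWeight])

theorem summable_pi_prod_of_nonneg {ι β : Type*} [Fintype ι] {f : β → ℝ} (hf0 : ∀ b, 0 ≤ f b)
    (hf : Summable f) :
    Summable fun g : ι → β => ∏ i, f (g i) := by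
  have hfin : ∀ n, Summable fun g : Fin n → β => ∏ i, f (g i) := by
    intro n
    induction n with
    | zero => exact .of_finite
    | succ n ih =>
      have h := hf.mul_of_nonneg ih hf0 fun g => prod_nonneg fun i _ => hf0 (g i)
      refine (Fin.consEquiv fun _ => β).summable_iff.1 (h.congr fun p => ?_)
      simp [Fin.prod_univ_succ]
  let e := (Fintype.equivFin ι).arrowCongr (Equiv.refl β)
  refine e.symm.summable_iff.1 ((hfin _).congr fun g => ?_)
  exact ((Fintype.equivFin ι).prod_comp fun i => f (g i)).symm

theorem Real.rpow_neg_card_mul_le_prod_rpow_neg {ι : Type*} (s : Finset ι) {x : ι → ℝ} {a δ : ℝ}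
    (ha : 0 ≤ a) (hδ : 0 ≤ δ) (hx : ∀ i ∈ s, 0 < x i ∧ x i ≤ a) :
    a ^ (-(#s * δ)) ≤ ∏ i ∈ s, x i ^ (-δ) := by
  calc a ^ (-(#s * δ)) = ∏ _i ∈ s, a ^ (-δ) := by
        rw [prod_const, ← Real.rpow_natCast, ← Real.rpow_mul ha, neg_mul_eq_mul_neg, mul_comm]
    _ ≤ ∏ i ∈ s, x i ^ (-δ) :=
        prod_le_prod (fun _ _ => by positivity) fun i hi =>
          Real.rpow_le_rpow_of_nonpos (hx i hi).1 (hx i hi).2 (neg_nonpos.2 hδ)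

theorem div_mul_rpow_neg_eq_divisorWeight {δ : ℝ} {m : ℤ} (hm : m ≠ 0) :
    (#m.natAbs.divisors : ℝ) / |(m : ℝ)| * |(m : ℝ)| ^ (-δ) = divisorWeight δ m := by
  have hm' : 0 < |(m : ℝ)| := by positivity
  rw [divisorWeight, Real.rpow_add hm', Real.rpow_one, Real.rpow_neg hm'.le]
  field_simp

theorem abs_prod_card_divisors_div_le {ι : Type*} [Fintype ι] [DecidableEq ι] {n : ι → ℤ}
    (hn : ∀ i, n i ≠ 0) {j : ι} (hj : ∀ i, |n i| ≤ |n j|) {δ : ℝ} (hδ0 : 0 ≤ δ)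
    (hδ : (Fintype.card ι - 1 : ℝ) * δ = 1 / 2) :
    |∏ i, (#(n i).natAbs.divisors : ℝ) / n i| ≤ 2 * ∏ i : {i // i ≠ j}, divisorWeight δ (n i) := by
  set x : ι → ℝ := fun i => |(n i : ℝ)|
  have hx : ∀ i, 0 < x i ∧ x i ≤ x j := fun i =>
    ⟨abs_pos.2 (Int.cast_ne_zero.2 (hn i)), by simpa [x, ← Int.cast_abs] using hj i⟩
  have hcard : (#(univ : Finset {i // i ≠ j}) : ℝ) = Fintype.card ι - 1 := by
    simp [Nat.cast_sub (Fintype.card_pos_iff.2 ⟨j⟩)]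
  -- the largest coordinate carries `x j ^ (-1/2)`, which is spread as `x j ^ (-δ)` over the others
  have hmax : (#(n j).natAbs.divisors : ℝ) / x j ≤ 2 * ∏ i : {i // i ≠ j}, x i ^ (-δ) :=
    calc (#(n j).natAbs.divisors : ℝ) / x j ≤ 2 * x j ^ (-(1 / 2) : ℝ) := by
          simpa [x, Nat.cast_natAbs] using Nat.card_divisors_div_le_two_mul_rpow (n j).natAbs
      _ ≤ 2 * ∏ i : {i // i ≠ j}, x i ^ (-δ) := by
          rw [← hδ, ← hcard]
          gcongr
          exact Real.rpow_neg_card_mul_le_prod_rpow_neg _ (hx j).1.le hδ0 fun i _ => hx i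
  set P := ∏ i : {i // i ≠ j}, (#(n i).natAbs.divisors : ℝ) / x i
  calc |∏ i, (#(n i).natAbs.divisors : ℝ) / n i|
      = (#(n j).natAbs.divisors : ℝ) / x j * P := by
        rw [abs_prod, Fintype.prod_eq_mul_prod_subtype_ne _ j]
        simp [x, P, abs_div]
    _ ≤ 2 * (∏ i : {i // i ≠ j}, x i ^ (-δ)) * P :=
        mul_le_mul_of_nonneg_right hmax (prod_nonneg fun i _ => by positivity)
    _ = 2 * ∏ i : {i // i ≠ j}, divisorWeight δ (n i) := by
        rw [mul_assoc, ← prod_mul_distrib]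
        congr 1
        exact prod_congr rfl fun i _ => by
          rw [mul_comm]; exact div_mul_rpow_neg_eq_divisorWeight (hn i)

theorem injective_restrict_ne_of_sum_eq_zero {ι G : Type*} [Fintype ι] [DecidableEq ι]
    [AddCommGroup G] (j : ι) :
    Function.Injective fun n : {n : ι → G // ∑ i, n i = 0} => fun i : {i // i ≠ j} => n.1 i := by
  rintro ⟨n, hn⟩ ⟨n', hn'⟩ h
  have hoff : ∀ i : {i // i ≠ j}, n i = n' i := congrFun h
  refine Subtype.ext (funext fun i => ?_)
  by_cases hij : i = j
  · subst hij
    rw [Fintype.sum_eq_add_sum_subtype_ne _ i] at hn hn'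
    simp only [hoff] at hn
    exact add_right_cancel (hn.trans hn'.symm)
  · exact hoff ⟨i, hij⟩

theorem summable_prod_restrict_ne_of_sum_eq_zero {ι : Type*} [Fintype ι] [DecidableEq ι]
    {f : ℤ → ℝ} (hf0 : ∀ m, 0 ≤ f m) (hf : Summable f) (j : ι) :
    Summable fun n : {n : ι → ℤ // ∑ i, n i = 0} => ∏ i : {i // i ≠ j}, f (n.1 i) :=
  (summable_pi_prod_of_nonneg hf0 hf).comp_injective (injective_restrict_ne_of_sum_eq_zero j)

noncomputable def diagonalTerm {ι : Type*} [Fintype ι] (n : ι → ℤ) : ℝ :=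
  if (∀ i, n i ≠ 0) ∧ ∑ i, n i = 0 then ∏ i, (#(n i).natAbs.divisors : ℝ) / n i else 0

theorem norm_diagonalTerm_le {ι : Type*} [Fintype ι] [DecidableEq ι] [Nonempty ι] {δ : ℝ}
    (hδ0 : 0 ≤ δ) (hδ : (Fintype.card ι - 1 : ℝ) * δ = 1 / 2) (n : ι → ℤ) :
    ‖diagonalTerm n‖ ≤ ∑ j : ι, 2 * ∏ i : {i // i ≠ j}, divisorWeight δ (n i) := by
  have hnonneg : ∀ j : ι, 0 ≤ 2 * ∏ i : {i // i ≠ j}, divisorWeight δ (n i) := fun j =>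
    mul_nonneg zero_le_two (prod_nonneg fun i _ => divisorWeight_nonneg δ _)
  by_cases hn : (∀ i, n i ≠ 0) ∧ ∑ i, n i = 0
  · obtain ⟨j, hj⟩ := Finite.exists_max fun i => |n i|
    calc ‖diagonalTerm n‖ = |∏ i, (#(n i).natAbs.divisors : ℝ) / n i| := by
          rw [diagonalTerm, if_pos hn, Real.norm_eq_abs]
      _ ≤ 2 * ∏ i : {i // i ≠ j}, divisorWeight δ (n i) :=
          abs_prod_card_divisors_div_le hn.1 hj hδ0 hδ
      _ ≤ ∑ j : ι, 2 * ∏ i : {i // i ≠ j}, divisorWeight δ (n i) :=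
          single_le_sum (fun j _ => hnonneg j) (mem_univ j)
  · rw [diagonalTerm, if_neg hn, norm_zero]
    exact sum_nonneg fun j _ => hnonneg j

theorem summable_diagonalTerm {ι : Type*} [Fintype ι] (hι : 2 ≤ Fintype.card ι) :
    Summable (diagonalTerm (ι := ι)) := by
  classical
  have : Nonempty ι := Fintype.card_pos_iff.1 (by omega)
  have hι1 : (0 : ℝ) < Fintype.card ι - 1 := by
    rw [sub_pos]; exact_mod_cast hι
  set δ : ℝ := 1 / (2 * (Fintype.card ι - 1)) with hδdef
  have hδ0 : 0 < δ := by positivity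
  have hδ : (Fintype.card ι - 1 : ℝ) * δ = 1 / 2 := by rw [hδdef]; field_simp
  have hsupp : ∀ n ∉ Set.range (Subtype.val : {n : ι → ℤ // ∑ i, n i = 0} → ι → ℤ),
      diagonalTerm n = 0 := fun n hn => by
    have : ∑ i, n i ≠ 0 := fun h => hn ⟨⟨n, h⟩, rfl⟩
    simp [diagonalTerm, this]
  refine (Subtype.val_injective.summable_iff hsupp).1 <| .of_norm_bounded
    (summable_sum fun j _ => (summable_prod_restrict_ne_of_sum_eq_zero (divisorWeight_nonneg δ)
      (summable_divisorWeight hδ0) j).mul_left 2) fun n => norm_diagonalTerm_le hδ0.le hδ n.1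

theorem tendsto_piFinset_const_atTop {ι α β : Type*} [Fintype ι] [DecidableEq ι] {l : Filter β}
    {s : β → Finset α} (hs : Tendsto s l atTop) :
    Tendsto (fun b => Fintype.piFinset fun _ : ι => s b) l atTop := by
  classical
  refine tendsto_atTop.2 fun t => ?_
  filter_upwards [tendsto_atTop.1 hs (t.biUnion fun n => univ.image n)] with b hb n hn
  exact Fintype.mem_piFinset.2 fun i => hb (mem_biUnion.2 ⟨n, hn, mem_image_of_mem n (mem_univ i)⟩)

theorem momentSum_eq_mul_sum_diagonalTerm (k X : ℕ) :
    momentSum k X = (-1 : ℝ) ^ (k / 2) / Real.pi ^ (2 * k) *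
      ∑ n ∈ Fintype.piFinset (fun _ : Fin k => Icc (-(X : ℤ)) X), diagonalTerm n := by
  -- the two `if`s decide `∀ i : Fin k, n i ≠ 0` through different instances
  unfold momentSum diagonalTerm
  congr!

theorem Hk_exists :
    ∀ k : ℕ, Even k → 2 ≤ k →
      ∃ H : ℝ, Tendsto (fun X => momentSum k X) atTop (nhds H) := by
  intro k _ hk
  have hbox : Tendsto (fun X : ℕ => Fintype.piFinset fun _ : Fin k => Icc (-(X : ℤ)) X)
      atTop atTop :=
    tendsto_piFinset_const_atTop tendsto_Icc_neg
  have hsum : Tendsto (fun s => ∑ n ∈ s, diagonalTerm n) atTop (nhds (∑' n, diagonalTerm n)) :=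
    (summable_diagonalTerm (ι := Fin k) (by simpa using hk)).hasSum
  simp only [momentSum_eq_mul_sum_diagonalTerm]
  exact ⟨_, (hsum.comp hbox).const_mul _⟩
end

section
/- For every ε > 0 there exist constants B > 0 and C > 0 such that for all real K ≥ 1, the Lebesgue measure of the set { x ∈ [0,1] : x is irrational and there exists an integer r ≥ 1 with v_r(x) ≥ K·e^{B r} } is at most C·K^{−1+ε}. -/
open Filter MeasureTheory
open scoped ENNReal

/-- `cfDen x n` is the denominator `v_n` of the `n`-th convergent of the
continued fraction expansion of `x` (so `v₀ = 1`, `v₁ = a₁`,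
`v_{ℓ+1} = a_{ℓ+1} v_ℓ + v_{ℓ-1}`). -/
noncomputable def cfDen (x : ℝ) (n : ℕ) : ℝ := (GenContFract.of x).dens n

namespace CFAux

open GenContFract Real

/-- Combined continuant recursion: `((p_n, p_{n-1}), (q_n, q_{n-1}))` with partial
quotient at step `i` equal to `b i + 1` (and integer part `0`). -/
def cont (b : ℕ → ℕ) : ℕ → (ℤ × ℤ) × (ℕ × ℕ)
  | 0 => ((0, 1), (1, 0))
  | n + 1 =>
      ((((b n : ℤ) + 1) * (cont b n).1.1 + (cont b n).1.2, (cont b n).1.1),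
       ((b n + 1) * (cont b n).2.1 + (cont b n).2.2, (cont b n).2.1))

lemma cont_q_pos (b : ℕ → ℕ) : ∀ n, 1 ≤ (cont b n).2.1
  | 0 => le_refl 1
  | n + 1 => by
      have h := cont_q_pos b n
      show 1 ≤ (b n + 1) * (cont b n).2.1 + (cont b n).2.2
      calc 1 ≤ (cont b n).2.1 := h
        _ ≤ (b n + 1) * (cont b n).2.1 := Nat.le_mul_of_pos_left _ (Nat.succ_pos _)
        _ ≤ _ := Nat.le_add_right _ _

lemma cont_congr {b c : ℕ → ℕ} : ∀ n, (∀ i, i < n → b i = c i) → cont b n = cont c n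
  | 0, _ => rfl
  | n + 1, h => by
      have ih := cont_congr n (fun i hi => h i (Nat.lt_succ_of_lt hi))
      have hn := h n (Nat.lt_succ_self n)
      show (_, _) = (_, _)
      rw [ih, hn]

/-- The cylinder: the continuants of `of x` are given by `cont b` when the partial
quotients are `b i + 1`. -/
lemma contsAux_eq (x : ℝ) (hfl : ⌊x⌋ = 0) (b : ℕ → ℕ) :
    ∀ n, (∀ i, i < n → (GenContFract.of x).s.get? i = some ⟨1, (b i : ℝ) + 1⟩) →
      (GenContFract.of x).contsAux (n + 1) = ⟨((cont b n).1.1 : ℝ), ((cont b n).2.1 : ℝ)⟩ ∧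
      (GenContFract.of x).contsAux n = ⟨((cont b n).1.2 : ℝ), ((cont b n).2.2 : ℝ)⟩ := by
  intro n
  induction n with
  | zero =>
      intro _
      constructor
      · rw [first_contAux_eq_h_one, of_h_eq_floor, hfl]
        simp [cont]
      · rw [zeroth_contAux_eq_one_zero]
        simp [cont]
  | succ n ih =>
      intro hb
      have hbn : ∀ i, i < n → (GenContFract.of x).s.get? i = some ⟨1, (b i : ℝ) + 1⟩ :=
        fun i hi => hb i (Nat.lt_succ_of_lt hi)
      obtain ⟨h1, h2⟩ := ih hbn
      refine ⟨?_, h1⟩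
      have hrec := contsAux_recurrence (g := GenContFract.of x)
        (hb n (Nat.lt_succ_self n)) h2 h1
      rw [hrec]
      simp only [GenContFract.Pair.mk.injEq]
      constructor <;> push_cast [cont] <;> ring

lemma dens_nums_eq (x : ℝ) (hfl : ⌊x⌋ = 0) (b : ℕ → ℕ) (n : ℕ)
    (hb : ∀ i, i < n → (GenContFract.of x).s.get? i = some ⟨1, (b i : ℝ) + 1⟩) :
    (GenContFract.of x).dens n = ((cont b n).2.1 : ℝ) ∧
      (GenContFract.of x).nums n = ((cont b n).1.1 : ℝ) := by
  obtain ⟨h1, _⟩ := contsAux_eq x hfl b n hb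
  constructor
  · rw [den_eq_conts_b, nth_cont_eq_succ_nth_contAux, h1]
  · rw [num_eq_conts_a, nth_cont_eq_succ_nth_contAux, h1]

lemma not_terminatedAt (x : ℝ) (hx : Irrational x) (n : ℕ) :
    ¬(GenContFract.of x).TerminatedAt n := by
  intro h
  have hterm : (GenContFract.of x).Terminates := ⟨n, h⟩
  obtain ⟨q, hq⟩ := (terminates_iff_rat x).1 hterm
  exact hx ⟨q, hq.symm⟩

lemma exists_snth (x : ℝ) (hx : Irrational x) (i : ℕ) :
    ∃ m : ℕ, (GenContFract.of x).s.get? i = some ⟨1, (m : ℝ) + 1⟩ := by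
  have hnt : ¬(GenContFract.of x).TerminatedAt i := not_terminatedAt x hx i
  obtain ⟨gp, hgp⟩ := Option.ne_none_iff_exists'.1 hnt
  obtain ⟨ha, z, hz⟩ := of_partNum_eq_one_and_exists_int_partDen_eq hgp
  have h1 : (1 : ℝ) ≤ gp.b := of_one_le_get?_partDen (partDen_eq_s_b hgp)
  have hz1 : 1 ≤ z := by
    rw [hz] at h1
    exact_mod_cast h1
  refine ⟨(z - 1).toNat, ?_⟩
  have hcast : ((z - 1).toNat : ℝ) + 1 = gp.b := by
    rw [hz]
    have hint : ((z - 1).toNat : ℤ) + 1 = z := by omega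
    exact_mod_cast hint
  rw [hgp]
  congr 1
  obtain ⟨a, bb⟩ := gp
  simp only at ha hcast
  rw [ha, ← hcast]

/-- Extend a finite tuple to `ℕ → ℕ` by zero. -/
def extf (r : ℕ) (f : Fin r → ℕ) : ℕ → ℕ := fun i => if h : i < r then f ⟨i, h⟩ else 0

def Qf {r : ℕ} (f : Fin r → ℕ) : ℕ := (cont (extf r f) r).2.1

def Pf {r : ℕ} (f : Fin r → ℕ) : ℤ := (cont (extf r f) r).1.1

lemma Qf_pos {r : ℕ} (f : Fin r → ℕ) : 1 ≤ Qf f := cont_q_pos _ r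

/-- The covering set associated with a cylinder. -/
noncomputable def Ecyl (r : ℕ) (T : ℝ) (f : Fin r → ℕ) : Set ℝ :=
  if T ≤ (Qf f : ℝ) then
    Metric.closedBall ((Pf f : ℝ) / (Qf f : ℝ)) (1 / (Qf f : ℝ) ^ 2)
  else ∅

lemma subset_cover (r : ℕ) (T : ℝ) :
    {x : ℝ | x ∈ Set.Icc (0 : ℝ) 1 ∧ Irrational x ∧ cfDen x r ≥ T} ⊆
      ⋃ f : Fin r → ℕ, Ecyl r T f := by
  rintro x ⟨⟨hx0, hx1⟩, hirr, hge⟩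
  have hfl : ⌊x⌋ = 0 := by
    rw [Int.floor_eq_zero_iff]
    refine ⟨hx0, lt_of_le_of_ne hx1 ?_⟩
    intro h
    exact (hirr.ne_int 1) (by rw [h]; norm_num)
  choose m hm using exists_snth x hirr
  set f : Fin r → ℕ := fun i => m i with hf
  have hagree : ∀ i, i < r → extf r f i = m i := by
    intro i hi
    simp [extf, hi, hf]
  have hcc : cont (extf r f) r = cont m r := cont_congr r hagree
  have hden := dens_nums_eq x hfl m r (fun i _ => hm i)
  have hQ : (GenContFract.of x).dens r = ((Qf f : ℕ) : ℝ) := by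
    rw [hden.1, Qf, hcc]
  have hP : (GenContFract.of x).nums r = ((Pf f : ℤ) : ℝ) := by
    rw [hden.2, Pf, hcc]
  have hT : T ≤ (Qf f : ℝ) := by
    rw [← hQ]
    exact hge
  refine Set.mem_iUnion.2 ⟨f, ?_⟩
  rw [Ecyl, if_pos hT]
  have hQpos : (0 : ℝ) < (Qf f : ℝ) := by
    have := Qf_pos f
    exact_mod_cast Nat.lt_of_lt_of_le Nat.zero_lt_one this
  have habs : |x - (GenContFract.of x).convs r| ≤
      1 / ((GenContFract.of x).dens r * (GenContFract.of x).dens (r + 1)) :=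
    abs_sub_convs_le (not_terminatedAt x hirr r)
  have hmono : (GenContFract.of x).dens r ≤ (GenContFract.of x).dens (r + 1) :=
    of_den_mono
  have hdenpos : (0 : ℝ) < (GenContFract.of x).dens r := by rw [hQ]; exact hQpos
  have hle2 : 1 / ((GenContFract.of x).dens r * (GenContFract.of x).dens (r + 1)) ≤
      1 / ((GenContFract.of x).dens r * (GenContFract.of x).dens r) := by
    apply one_div_le_one_div_of_le
    · positivity
    · exact mul_le_mul_of_nonneg_left hmono hdenpos.le
  rw [Metric.mem_closedBall]
  have hconv : (GenContFract.of x).convs r = ((Pf f : ℝ)) / ((Qf f : ℝ)) := by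
    rw [conv_eq_num_div_den, hQ, hP]
  calc dist x ((Pf f : ℝ) / (Qf f : ℝ)) = |x - (GenContFract.of x).convs r| := by
        rw [hconv, Real.dist_eq]
    _ ≤ 1 / ((GenContFract.of x).dens r * (GenContFract.of x).dens (r + 1)) := habs
    _ ≤ 1 / ((GenContFract.of x).dens r * (GenContFract.of x).dens r) := hle2
    _ = 1 / (Qf f : ℝ) ^ 2 := by rw [hQ]; ring

lemma vol_Ecyl {δ : ℝ} (hδ0 : 0 < δ) (hδ1 : δ < 1) (r : ℕ) {T : ℝ} (hT : 0 < T)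
    (f : Fin r → ℕ) :
    volume (Ecyl r T f) ≤
      ENNReal.ofReal (2 * T ^ (-δ)) * ENNReal.ofReal ((Qf f : ℝ) ^ (-(2 - δ))) := by
  rw [Ecyl]
  split_ifs with hTQ
  · rw [Real.volume_closedBall]
    rw [← ENNReal.ofReal_mul (by positivity)]
    apply ENNReal.ofReal_le_ofReal
    have hQpos : (0 : ℝ) < (Qf f : ℝ) := by
      have := Qf_pos f
      exact_mod_cast Nat.lt_of_lt_of_le Nat.zero_lt_one this
    have key : 1 / (Qf f : ℝ) ^ 2 ≤ T ^ (-δ) * (Qf f : ℝ) ^ (-(2 - δ)) := by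
      have h1 : (Qf f : ℝ) ^ (-(2 : ℝ)) = 1 / (Qf f : ℝ) ^ 2 := by
        rw [Real.rpow_neg hQpos.le, one_div]
        congr 1
        rw [show (2 : ℝ) = ((2 : ℕ) : ℝ) by norm_num, Real.rpow_natCast]
      have h2 : (Qf f : ℝ) ^ (-(2 : ℝ)) = (Qf f : ℝ) ^ (-δ) * (Qf f : ℝ) ^ (-(2 - δ)) := by
        rw [← Real.rpow_add hQpos]
        ring_nf
      have h3 : (Qf f : ℝ) ^ (-δ) ≤ T ^ (-δ) :=
        Real.rpow_le_rpow_of_nonpos hT hTQ (by linarith)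
      rw [← h1, h2]
      exact mul_le_mul_of_nonneg_right h3 (Real.rpow_nonneg hQpos.le _)
    calc 2 * (1 / (Qf f : ℝ) ^ 2) ≤ 2 * (T ^ (-δ) * (Qf f : ℝ) ^ (-(2 - δ))) := by
          exact mul_le_mul_of_nonneg_left key (by norm_num)
      _ = 2 * T ^ (-δ) * (Qf f : ℝ) ^ (-(2 - δ)) := by ring
  · simp

/-- The moment sum over cylinders of depth `r` is at most `Z ^ r`. -/
lemma tsum_Qf_le {t : ℝ} (ht : 0 ≤ t) :
    ∀ r : ℕ, ∑' f : Fin r → ℕ, ENNReal.ofReal ((Qf f : ℝ) ^ (-t)) ≤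
      (∑' m : ℕ, ENNReal.ofReal (((m : ℝ) + 1) ^ (-t))) ^ r := by
  intro r
  induction r with
  | zero =>
      have huniq : ∀ g : Fin 0 → ℕ, g = (fun i => i.elim0) := by
        intro g; funext i; exact i.elim0
      rw [tsum_eq_single (fun i : Fin 0 => i.elim0)
        (fun g hg => absurd (huniq g) hg)]
      have : Qf (fun i : Fin 0 => i.elim0) = 1 := rfl
      rw [this]
      simp
  | succ r ih =>
      set Z := ∑' m : ℕ, ENNReal.ofReal (((m : ℝ) + 1) ^ (-t)) with hZ
      have he := (Fin.snocEquiv (fun _ : Fin (r + 1) => ℕ)).tsum_eq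
        (f := fun f : Fin (r + 1) → ℕ => ENNReal.ofReal ((Qf f : ℝ) ^ (-t)))
      rw [← he]
      have key : ∀ p : ℕ × (Fin r → ℕ),
          ENNReal.ofReal ((Qf (Fin.snocEquiv (fun _ => ℕ) p) : ℝ) ^ (-t)) ≤
            ENNReal.ofReal (((p.1 : ℝ) + 1) ^ (-t)) *
              ENNReal.ofReal ((Qf p.2 : ℝ) ^ (-t)) := by
        rintro ⟨a, g⟩
        have hsnoc : (Fin.snocEquiv (fun _ : Fin (r + 1) => ℕ) (a, g)) = Fin.snoc g a := by
          funext i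
          rfl
        have hext_lt : ∀ i, i < r → extf (r + 1) (Fin.snoc g a) i = extf r g i := by
          intro i hi
          have hi1 : i < r + 1 := Nat.lt_succ_of_lt hi
          simp only [extf, dif_pos hi1, dif_pos hi]
          have : (⟨i, hi1⟩ : Fin (r + 1)) = Fin.castSucc ⟨i, hi⟩ := rfl
          rw [this, Fin.snoc_castSucc]
        have hext_r : extf (r + 1) (Fin.snoc g a) r = a := by
          simp only [extf, dif_pos (Nat.lt_succ_self r)]
          have : (⟨r, Nat.lt_succ_self r⟩ : Fin (r + 1)) = Fin.last r := rfl
          rw [this, Fin.snoc_last]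
        have hcc : cont (extf (r + 1) (Fin.snoc g a)) r = cont (extf r g) r :=
          cont_congr r hext_lt
        have hQrec : (a + 1) * Qf g ≤ Qf (Fin.snoc g a : Fin (r + 1) → ℕ) := by
          show (a + 1) * Qf g ≤ (cont (extf (r + 1) (Fin.snoc g a)) (r + 1)).2.1
          show (a + 1) * Qf g ≤
            (extf (r + 1) (Fin.snoc g a) r + 1) * (cont (extf (r + 1) (Fin.snoc g a)) r).2.1 +
              (cont (extf (r + 1) (Fin.snoc g a)) r).2.2
          rw [hext_r, hcc]
          exact Nat.le_add_right _ _
        rw [hsnoc]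
        have hQgpos : (0 : ℝ) < ((a + 1) * Qf g : ℕ) := by
          have h1 := Qf_pos g
          positivity
        have hle : (((a + 1) * Qf g : ℕ) : ℝ) ≤ (Qf (Fin.snoc g a : Fin (r + 1) → ℕ) : ℝ) := by
          exact_mod_cast hQrec
        have h3 : (Qf (Fin.snoc g a : Fin (r + 1) → ℕ) : ℝ) ^ (-t) ≤
            (((a + 1) * Qf g : ℕ) : ℝ) ^ (-t) :=
          Real.rpow_le_rpow_of_nonpos hQgpos hle (by linarith)
        have h4 : (((a + 1) * Qf g : ℕ) : ℝ) ^ (-t) =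
            ((a : ℝ) + 1) ^ (-t) * (Qf g : ℝ) ^ (-t) := by
          push_cast
          rw [← Real.mul_rpow (by positivity) (Nat.cast_nonneg _)]
        rw [← ENNReal.ofReal_mul (Real.rpow_nonneg (by positivity) _), ← h4]
        exact ENNReal.ofReal_le_ofReal h3
      calc ∑' p : ℕ × (Fin r → ℕ),
            ENNReal.ofReal ((Qf (Fin.snocEquiv (fun _ => ℕ) p) : ℝ) ^ (-t))
          ≤ ∑' p : ℕ × (Fin r → ℕ),
            ENNReal.ofReal (((p.1 : ℝ) + 1) ^ (-t)) * ENNReal.ofReal ((Qf p.2 : ℝ) ^ (-t)) :=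
            ENNReal.tsum_le_tsum key
        _ = ∑' a : ℕ, ∑' g : Fin r → ℕ,
            ENNReal.ofReal (((a : ℝ) + 1) ^ (-t)) * ENNReal.ofReal ((Qf g : ℝ) ^ (-t)) :=
            ENNReal.tsum_prod'
        _ = ∑' a : ℕ, ENNReal.ofReal (((a : ℝ) + 1) ^ (-t)) *
            ∑' g : Fin r → ℕ, ENNReal.ofReal ((Qf g : ℝ) ^ (-t)) := by
            congr 1; funext a; exact ENNReal.tsum_mul_left
        _ = Z * ∑' g : Fin r → ℕ, ENNReal.ofReal ((Qf g : ℝ) ^ (-t)) :=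
            ENNReal.tsum_mul_right
        _ ≤ Z * Z ^ r := mul_le_mul_right ih Z
        _ = Z ^ (r + 1) := (pow_succ' Z r).symm

/-- Main per-level estimate. -/
lemma vol_level {δ : ℝ} (hδ0 : 0 < δ) (hδ1 : δ < 1) (r : ℕ) {T : ℝ} (hT : 0 < T) :
    volume {x : ℝ | x ∈ Set.Icc (0 : ℝ) 1 ∧ Irrational x ∧ cfDen x r ≥ T} ≤
      ENNReal.ofReal (2 * T ^ (-δ)) *
        (∑' m : ℕ, ENNReal.ofReal (((m : ℝ) + 1) ^ (-(2 - δ)))) ^ r := by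
  calc volume {x : ℝ | x ∈ Set.Icc (0 : ℝ) 1 ∧ Irrational x ∧ cfDen x r ≥ T}
      ≤ volume (⋃ f : Fin r → ℕ, Ecyl r T f) := measure_mono (subset_cover r T)
    _ ≤ ∑' f : Fin r → ℕ, volume (Ecyl r T f) := measure_iUnion_le _
    _ ≤ ∑' f : Fin r → ℕ, ENNReal.ofReal (2 * T ^ (-δ)) *
          ENNReal.ofReal ((Qf f : ℝ) ^ (-(2 - δ))) :=
        ENNReal.tsum_le_tsum (vol_Ecyl hδ0 hδ1 r hT)
    _ = ENNReal.ofReal (2 * T ^ (-δ)) *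
          ∑' f : Fin r → ℕ, ENNReal.ofReal ((Qf f : ℝ) ^ (-(2 - δ))) := ENNReal.tsum_mul_left
    _ ≤ _ := mul_le_mul_right (tsum_Qf_le (by linarith) r) _

end CFAux

theorem measure_large_cfDen :
    ∀ ε > (0 : ℝ), ∃ B > (0 : ℝ), ∃ C > (0 : ℝ), ∀ K : ℝ, 1 ≤ K →
      volume {x : ℝ | x ∈ Set.Icc (0 : ℝ) 1 ∧ Irrational x ∧
          ∃ r : ℕ, 1 ≤ r ∧ cfDen x r ≥ K * Real.exp (B * r)}
        ≤ ENNReal.ofReal (C * K ^ (-1 + ε : ℝ)) := by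
  intro ε hε
  -- set up parameters
  set ε' : ℝ := min ε (1 / 2) with hε'
  have hε'0 : 0 < ε' := lt_min hε (by norm_num)
  have hε'le : ε' ≤ 1 / 2 := min_le_right _ _
  have hε'ε : ε' ≤ ε := min_le_left _ _
  set δ : ℝ := 1 - ε' with hδ
  have hδ0 : 0 < δ := by simp only [hδ]; linarith
  have hδ1 : δ < 1 := by simp only [hδ]; linarith
  have hδhalf : 1 / 2 ≤ δ := by simp only [hδ]; linarith
  set t : ℝ := 2 - δ with htdef
  have ht1 : 1 < t := by simp only [htdef]; linarith
  -- the real zeta-like sum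
  have hsum : Summable (fun m : ℕ => ((m : ℝ) + 1) ^ (-t)) := by
    have h0 : Summable (fun n : ℕ => 1 / (n : ℝ) ^ t) :=
      Real.summable_one_div_nat_rpow.mpr ht1
    have h1 : Summable (fun m : ℕ => 1 / ((m + 1 : ℕ) : ℝ) ^ t) :=
      h0.comp_injective (add_left_injective 1)
    refine h1.congr fun m => ?_
    rw [Real.rpow_neg (by positivity), one_div]
    push_cast
    ring_nf
  set Zr : ℝ := ∑' m : ℕ, ((m : ℝ) + 1) ^ (-t) with hZr
  have hZr1 : 1 ≤ Zr := by
    have h0 : ((0 : ℕ) : ℝ) + 1 = 1 := by norm_num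
    have := Summable.le_tsum hsum 0 (fun j _ => Real.rpow_nonneg (by positivity) _)
    rw [h0, Real.one_rpow] at this
    exact this
  have hZrpos : 0 < Zr := by linarith
  have hZ_eq : (∑' m : ℕ, ENNReal.ofReal (((m : ℝ) + 1) ^ (-t))) = ENNReal.ofReal Zr := by
    rw [hZr, ENNReal.ofReal_tsum_of_nonneg (fun m => Real.rpow_nonneg (by positivity) _) hsum]
  -- choose B
  set B : ℝ := 2 * Real.log (2 * Zr) + 1 with hB
  have hlogpos : 0 < Real.log (2 * Zr) :=
    Real.log_pos (by linarith)
  have hBpos : 0 < B := by simp only [hB]; linarith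
  refine ⟨B, hBpos, 2, by norm_num, ?_⟩
  intro K hK
  have hKpos : 0 < K := by linarith
  -- the key smallness of `w`
  have hwreal : Real.exp (-(δ * B)) * Zr ≤ 1 / 2 := by
    have hδB : Real.log (2 * Zr) ≤ δ * B := by
      have h1 : Real.log (2 * Zr) ≤ B / 2 := by simp only [hB]; linarith
      have h2 : B / 2 ≤ δ * B := by nlinarith
      exact h1.trans h2
    have h3 : Real.exp (-(δ * B)) ≤ Real.exp (-Real.log (2 * Zr)) :=
      Real.exp_le_exp.mpr (by linarith)
    have h4 : Real.exp (-Real.log (2 * Zr)) = (2 * Zr)⁻¹ := by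
      rw [Real.exp_neg, Real.exp_log (by linarith)]
    have h5 : Real.exp (-(δ * B)) * Zr ≤ (2 * Zr)⁻¹ * Zr :=
      mul_le_mul_of_nonneg_right (h3.trans_eq h4) hZrpos.le
    have h6 : (2 * Zr)⁻¹ * Zr = 1 / 2 := by field_simp
    rw [h6] at h5
    exact h5
  set w : ℝ≥0∞ := ENNReal.ofReal (Real.exp (-(δ * B))) * ENNReal.ofReal Zr with hw
  have hwle : w ≤ 2⁻¹ := by
    rw [hw, ← ENNReal.ofReal_mul (Real.exp_nonneg _)]
    calc ENNReal.ofReal (Real.exp (-(δ * B)) * Zr) ≤ ENNReal.ofReal (1 / 2) :=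
          ENNReal.ofReal_le_ofReal hwreal
      _ = 2⁻¹ := by
          rw [show (1 : ℝ) / 2 = (2 : ℝ)⁻¹ by norm_num]
          rw [ENNReal.ofReal_inv_of_pos (by norm_num)]
          norm_num
  -- union over levels
  have hsub : {x : ℝ | x ∈ Set.Icc (0 : ℝ) 1 ∧ Irrational x ∧
      ∃ r : ℕ, 1 ≤ r ∧ cfDen x r ≥ K * Real.exp (B * r)} ⊆
      ⋃ n : ℕ, {x : ℝ | x ∈ Set.Icc (0 : ℝ) 1 ∧ Irrational x ∧
        cfDen x (n + 1) ≥ K * Real.exp (B * (n + 1))} := by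
    rintro x ⟨hx1, hx2, r, hr1, hr2⟩
    refine Set.mem_iUnion.2 ⟨r - 1, hx1, hx2, ?_⟩
    have hreq : r - 1 + 1 = r := Nat.succ_pred_eq_of_pos hr1
    rw [hreq]
    convert hr2 using 3
    rw [← hreq]
    push_cast
    ring
  have hTpos : ∀ n : ℕ, (0 : ℝ) < K * Real.exp (B * (n + 1)) := by
    intro n
    positivity
  -- per level bound rearranged
  have hlevel : ∀ n : ℕ,
      volume {x : ℝ | x ∈ Set.Icc (0 : ℝ) 1 ∧ Irrational x ∧
        cfDen x (n + 1) ≥ K * Real.exp (B * (n + 1))} ≤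
      (ENNReal.ofReal 2 * ENNReal.ofReal (K ^ (-δ))) * w ^ (n + 1) := by
    intro n
    have h := CFAux.vol_level hδ0 hδ1 (n + 1) (hTpos n)
    rw [hZ_eq] at h
    refine h.trans ?_
    have hT : (K * Real.exp (B * (n + 1))) ^ (-δ) =
        K ^ (-δ) * Real.exp (-(δ * B)) ^ (n + 1) := by
      rw [Real.mul_rpow hKpos.le (Real.exp_nonneg _)]
      congr 1
      rw [← Real.exp_mul]
      rw [← Real.exp_nat_mul]
      congr 1
      push_cast
      ring
    rw [hT]
    have hexp : ∀ k : ℕ, (0:ℝ) ≤ Real.exp (-(δ * B)) ^ k := fun k => by positivity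
    rw [show 2 * (K ^ (-δ) * Real.exp (-(δ * B)) ^ (n + 1)) =
        (2 * K ^ (-δ)) * Real.exp (-(δ * B)) ^ (n + 1) by ring]
    rw [ENNReal.ofReal_mul (by positivity), ENNReal.ofReal_mul (by norm_num),
      ENNReal.ofReal_pow (Real.exp_nonneg _)]
    rw [hw, mul_pow]
    ring_nf
    exact le_refl _
  -- sum the geometric series
  calc volume {x : ℝ | x ∈ Set.Icc (0 : ℝ) 1 ∧ Irrational x ∧
        ∃ r : ℕ, 1 ≤ r ∧ cfDen x r ≥ K * Real.exp (B * r)}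
      ≤ volume (⋃ n : ℕ, {x : ℝ | x ∈ Set.Icc (0 : ℝ) 1 ∧ Irrational x ∧
          cfDen x (n + 1) ≥ K * Real.exp (B * (n + 1))}) := measure_mono hsub
    _ ≤ ∑' n : ℕ, volume {x : ℝ | x ∈ Set.Icc (0 : ℝ) 1 ∧ Irrational x ∧
          cfDen x (n + 1) ≥ K * Real.exp (B * (n + 1))} := measure_iUnion_le _
    _ ≤ ∑' n : ℕ, (ENNReal.ofReal 2 * ENNReal.ofReal (K ^ (-δ))) * w ^ (n + 1) :=
        ENNReal.tsum_le_tsum hlevel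
    _ = (ENNReal.ofReal 2 * ENNReal.ofReal (K ^ (-δ))) * ∑' n : ℕ, w ^ (n + 1) :=
        ENNReal.tsum_mul_left
    _ ≤ (ENNReal.ofReal 2 * ENNReal.ofReal (K ^ (-δ))) * 1 := by
        apply mul_le_mul_right
        rw [ENNReal.tsum_geometric_add_one]
        have h12 : (1 : ℝ≥0∞) - 2⁻¹ = 2⁻¹ := by
          rw [← ENNReal.inv_two_add_inv_two]
          exact ENNReal.add_sub_cancel_right (by norm_num)
        calc w * (1 - w)⁻¹ ≤ 2⁻¹ * (1 - 2⁻¹)⁻¹ := by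
              apply mul_le_mul' hwle
              apply ENNReal.inv_le_inv.mpr
              exact tsub_le_tsub_left hwle 1
          _ = 2⁻¹ * 2 := by rw [h12, inv_inv]
          _ = 1 := ENNReal.inv_mul_cancel two_ne_zero ENNReal.ofNat_ne_top
    _ = ENNReal.ofReal (2 * K ^ (-δ)) := by
        rw [mul_one, ← ENNReal.ofReal_mul (by norm_num)]
    _ ≤ ENNReal.ofReal (2 * K ^ (-1 + ε : ℝ)) := by
        apply ENNReal.ofReal_le_ofReal
        apply mul_le_mul_of_nonneg_left _ (by norm_num)
        apply Real.rpow_le_rpow_of_exponent_le hK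
        simp only [hδ]
        linarith
end

section
/- There exist constants B₀ > 0 and C > 0 such that for every B ≥ B₀, every integer n ≥ 1, and every real K with 1 ≤ K ≤ e^{B n}, the Lebesgue measure of the set { x ∈ [0,1] : x is irrational and v_n(x) ≥ K·e^{B n} } is at most C·e^{−B n/2}/K. -/
/-!
Writing `aᵢ` for the partial quotients of `x`, the recurrence `v_{k+1} = a_{k+1} v_k + v_{k-1}`
and `v_{k-1} ≤ v_k` give `v_n(x) ≤ ∏_{i=1}^n (aᵢ + 1)`, so it suffices to bound the measure of
the set where this digit product is at least `T`. A point of `(0,1)` with first digit `a + 1` is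
`1 / (a + 1 + G x)`, where `G` is the Gauss map, and `y ↦ 1 / (a + 1 + y)` is
`(a + 1)⁻²`-Lipschitz on `(0,1)`. Induction on `n` therefore bounds the measure by
`C_s ^ n T ^ (-s)` for every `0 ≤ s < 1`, with `C_s = ∑ₐ (a + 2) ^ s / (a + 1) ^ 2 < ∞`.
For `T = K e^{Bn}`, `s = 7/8` and `B ≥ 4 log C_s` this is at most `e^{-Bn/2} / K`.
-/

open Filter MeasureTheory
open scoped NNReal

namespace GenContFract

variable {K : Type*} [Field K] [LinearOrder K] [IsStrictOrderedRing K] [FloorRing K]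

theorem of_s_fract (v : K) : (GenContFract.of (Int.fract v)).s = (GenContFract.of v).s := by
  ext1 n
  cases n with
  | zero =>
    rcases eq_or_ne (Int.fract v) 0 with h | h
    · obtain ⟨a, rfl⟩ : ∃ a : ℤ, v = a := ⟨⌊v⌋, eq_of_sub_eq_zero h⟩
      rw [Int.fract_intCast, ← Int.cast_zero, of_s_of_int, of_s_of_int]
    · have h' : Int.fract (Int.fract v) ≠ 0 := by rwa [Int.fract_fract]
      exact (of_s_head h').trans (by rw [Int.fract_fract]; exact (of_s_head h).symm)
  | succ n => rw [of_s_succ, of_s_succ, Int.fract_fract]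

end GenContFract

theorem LipschitzOnWith.volume_image_le {K : ℝ≥0} {f : ℝ → ℝ} {s : Set ℝ}
    (h : LipschitzOnWith K f s) : volume (f '' s) ≤ K * volume s := by
  simpa [hausdorffMeasure_real] using h.hausdorffMeasure_image_le (d := 1) zero_le_one

theorem lipschitzOnWith_inv_const_add {c : ℝ} (hc : 0 < c) :
    LipschitzOnWith (c ^ 2)⁻¹.toNNReal (fun y => (c + y)⁻¹) (Set.Ici 0) := by
  refine LipschitzOnWith.of_dist_le_mul fun y (hy : 0 ≤ y) z (hz : 0 ≤ z) => ?_
  have hcy : 0 < c + y := by linarith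
  have hcz : 0 < c + z := by linarith
  rw [Real.dist_eq, Real.dist_eq, Real.coe_toNNReal _ (by positivity), inv_sub_inv hcy.ne' hcz.ne',
    abs_div, abs_of_pos (mul_pos hcy hcz), div_le_iff₀ (mul_pos hcy hcz), add_sub_add_left_eq_sub,
    abs_sub_comm]
  calc |y - z| = (c ^ 2)⁻¹ * |y - z| * c ^ 2 := by field_simp
    _ ≤ (c ^ 2)⁻¹ * |y - z| * ((c + y) * (c + z)) := by gcongr; nlinarith

noncomputable def gaussMap (x : ℝ) : ℝ := Int.fract x⁻¹

/-- `cfDigit x n` is the partial quotient `a_{n+1}` of `x ∈ (0,1)`. -/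
noncomputable def cfDigit (x : ℝ) (n : ℕ) : ℤ := ⌊(gaussMap^[n] x)⁻¹⌋

noncomputable def cfDigitProd (x : ℝ) (n : ℕ) : ℝ := ∏ i ∈ Finset.range n, ((cfDigit x i : ℝ) + 1)

theorem floor_inv_add_gaussMap_inv (x : ℝ) : ((⌊x⁻¹⌋ : ℝ) + gaussMap x)⁻¹ = x := by
  rw [gaussMap, Int.floor_add_fract, inv_inv]

theorem cfDigitProd_succ (x : ℝ) (n : ℕ) :
    cfDigitProd x (n + 1) = ((cfDigit x 0 : ℝ) + 1) * cfDigitProd (gaussMap x) n := by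
  simp only [cfDigitProd, Finset.prod_range_succ', cfDigit, Function.iterate_succ_apply]
  ring

section Irrational

variable {x : ℝ}

theorem irrational_gaussMap (hx : Irrational x) : Irrational (gaussMap x) :=
  hx.inv.sub_intCast _

theorem gaussMap_mem_Ioo (hx : Irrational x) : gaussMap x ∈ Set.Ioo 0 1 :=
  ⟨(Int.fract_nonneg _).lt_of_ne' (irrational_gaussMap hx).ne_zero, Int.fract_lt_one _⟩

theorem irrational_iterate_gaussMap (hx : Irrational x) (n : ℕ) :
    Irrational (gaussMap^[n] x) := by
  induction n with
  | zero => exact hx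
  | succ n ih => rw [Function.iterate_succ_apply']; exact irrational_gaussMap ih

theorem iterate_gaussMap_mem_Ioo (hx : Irrational x) (h0 : x ∈ Set.Ioo 0 1) (n : ℕ) :
    gaussMap^[n] x ∈ Set.Ioo 0 1 := by
  cases n with
  | zero => exact h0
  | succ n =>
    rw [Function.iterate_succ_apply']
    exact gaussMap_mem_Ioo (irrational_iterate_gaussMap hx n)

theorem one_le_cfDigit (hx : Irrational x) (h0 : x ∈ Set.Ioo 0 1) (n : ℕ) :
    1 ≤ cfDigit x n := by
  obtain ⟨hpos, hlt⟩ := iterate_gaussMap_mem_Ioo hx h0 n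
  exact Int.le_floor.2 (by exact_mod_cast (one_le_inv₀ hpos).2 hlt.le)

theorem of_s_get?_eq_cfDigit (hx : Irrational x) (h0 : x ∈ Set.Ioo 0 1) (n : ℕ) :
    (GenContFract.of x).s.get? n = some ⟨1, (cfDigit x n : ℝ)⟩ := by
  induction n generalizing x with
  | zero =>
    have hfract : Int.fract x = x := Int.fract_eq_self.2 ⟨h0.1.le, h0.2⟩
    have := GenContFract.of_s_head (v := x) (hfract.symm ▸ hx.ne_zero)
    rwa [hfract] at this
  | succ n ih =>
    rw [GenContFract.of_s_succ, Int.fract_eq_self.2 ⟨h0.1.le, h0.2⟩, ← GenContFract.of_s_fract]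
    exact ih (irrational_gaussMap hx) (gaussMap_mem_Ioo hx)

theorem cfDen_succ_le (hx : Irrational x) (h0 : x ∈ Set.Ioo 0 1) (n : ℕ) :
    cfDen x (n + 1) ≤ ((cfDigit x n : ℝ) + 1) * cfDen x n := by
  cases n with
  | zero =>
    rw [cfDen, GenContFract.first_den_eq (of_s_get?_eq_cfDigit hx h0 0), cfDen,
      GenContFract.zeroth_den_eq_one]
    linarith
  | succ n =>
    rw [cfDen, GenContFract.dens_recurrence (of_s_get?_eq_cfDigit hx h0 (n + 1)) rfl rfl]
    have hmono : (GenContFract.of x).dens n ≤ (GenContFract.of x).dens (n + 1) :=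
      GenContFract.of_den_mono
    simp only [cfDen]
    linarith

theorem cfDen_le_cfDigitProd (hx : Irrational x) (h0 : x ∈ Set.Ioo 0 1) (n : ℕ) :
    cfDen x n ≤ cfDigitProd x n := by
  induction n with
  | zero => simp [cfDen, cfDigitProd, GenContFract.zeroth_den_eq_one]
  | succ n ih =>
    have hdigit : (1 : ℝ) ≤ cfDigit x n := mod_cast one_le_cfDigit hx h0 n
    calc cfDen x (n + 1) ≤ ((cfDigit x n : ℝ) + 1) * cfDen x n := cfDen_succ_le hx h0 n
      _ ≤ ((cfDigit x n : ℝ) + 1) * cfDigitProd x n := by gcongr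
      _ = cfDigitProd x (n + 1) := by
        rw [cfDigitProd, cfDigitProd, Finset.prod_range_succ, mul_comm]

end Irrational

def digitProdSuperlevel (n : ℕ) (T : ℝ) : Set ℝ :=
  {x | x ∈ Set.Ioo 0 1 ∧ Irrational x ∧ T ≤ cfDigitProd x n}

theorem digitProdSuperlevel_succ_subset (n : ℕ) (T : ℝ) :
    digitProdSuperlevel (n + 1) T ⊆
      ⋃ a : ℕ, (fun y => ((a : ℝ) + 1 + y)⁻¹) '' digitProdSuperlevel n (T / ((a : ℝ) + 2)) := by
  rintro x ⟨h0, hx, hT⟩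
  obtain ⟨a, ha⟩ : ∃ a : ℕ, (a : ℤ) + 1 = cfDigit x 0 := ⟨(cfDigit x 0 - 1).toNat, by
    have := one_le_cfDigit hx h0 0; omega⟩
  have haR : (a : ℝ) + 1 = cfDigit x 0 := by exact_mod_cast ha
  refine Set.mem_iUnion.2 ⟨a, gaussMap x, ⟨gaussMap_mem_Ioo hx, irrational_gaussMap hx, ?_⟩, ?_⟩
  · rw [div_le_iff₀ (by positivity), show (a : ℝ) + 2 = cfDigit x 0 + 1 by linarith, mul_comm,
      ← cfDigitProd_succ]
    exact hT
  · rw [haR]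
    exact floor_inv_add_gaussMap_inv x

noncomputable def digitWeightSum (s : ℝ) : ℝ := ∑' a : ℕ, ((a : ℝ) + 2) ^ s / ((a : ℝ) + 1) ^ 2

theorem summable_digitWeight {s : ℝ} (hs : s < 1) :
    Summable fun a : ℕ => ((a : ℝ) + 2) ^ s / ((a : ℝ) + 1) ^ 2 := by
  have hp : Summable fun a : ℕ => 1 / |(a : ℝ) + 2| ^ (2 - s) :=
    (Real.summable_one_div_nat_add_rpow 2 (2 - s)).2 (by linarith)
  refine Summable.of_nonneg_of_le (fun a => by positivity) (fun a => ?_) (hp.mul_left 4)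
  have ha : (0 : ℝ) < a + 2 := by positivity
  rw [abs_of_pos ha, Real.rpow_sub ha, Real.rpow_two, div_le_iff₀ (by positivity)]
  field_simp
  nlinarith [(a.cast_nonneg : (0 : ℝ) ≤ a)]

theorem digitWeightSum_pos {s : ℝ} (hs : s < 1) : 0 < digitWeightSum s :=
  (summable_digitWeight hs).tsum_pos (fun _ => by positivity) 0 (by positivity)

theorem volume_image_inv_natCast_add_le (a : ℕ) {t : Set ℝ} (ht : t ⊆ Set.Ioo 0 1) :
    volume ((fun y : ℝ => (a + 1 + y)⁻¹) '' t) ≤ ENNReal.ofReal (((a : ℝ) + 1) ^ 2)⁻¹ * volume t :=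
  ((lipschitzOnWith_inv_const_add (by positivity : (0 : ℝ) < a + 1)).mono
    (ht.trans (Set.Ioo_subset_Ioi_self.trans Set.Ioi_subset_Ici_self))).volume_image_le

theorem volume_digitProdSuperlevel_zero_le {s : ℝ} (hs : 0 ≤ s) {T : ℝ} (hT : 0 < T) :
    volume (digitProdSuperlevel 0 T) ≤ ENNReal.ofReal (T ^ (-s)) := by
  rcases le_or_gt T 1 with hT1 | hT1
  · calc volume (digitProdSuperlevel 0 T) ≤ volume (Set.Ioo (0 : ℝ) 1) :=
          measure_mono fun _ hx => hx.1
      _ = ENNReal.ofReal 1 := by simp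
      _ ≤ ENNReal.ofReal (T ^ (-s)) :=
        ENNReal.ofReal_le_ofReal (Real.one_le_rpow_of_pos_of_le_one_of_nonpos hT hT1 (by linarith))
  · have : digitProdSuperlevel 0 T = ∅ :=
      Set.eq_empty_of_forall_notMem fun x hx => by
        simp [digitProdSuperlevel, cfDigitProd] at hx; linarith
    simp [this]

theorem volume_digitProdSuperlevel_le {s : ℝ} (hs0 : 0 ≤ s) (hs1 : s < 1) (n : ℕ) {T : ℝ}
    (hT : 0 < T) :
    volume (digitProdSuperlevel n T) ≤ ENNReal.ofReal (digitWeightSum s ^ n * T ^ (-s)) := by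
  induction n generalizing T with
  | zero => simpa using volume_digitProdSuperlevel_zero_le hs0 hT
  | succ n ih =>
    set C := digitWeightSum s
    have hC : 0 ≤ C := (digitWeightSum_pos hs1).le
    have term_le (a : ℕ) :
        volume ((fun y : ℝ => (a + 1 + y)⁻¹) '' digitProdSuperlevel n (T / (a + 2))) ≤
          ENNReal.ofReal (C ^ n * T ^ (-s) * (((a : ℝ) + 2) ^ s / ((a : ℝ) + 1) ^ 2)) := by
      have ha : (0 : ℝ) < a + 2 := by positivity
      calc _ ≤ ENNReal.ofReal (((a : ℝ) + 1) ^ 2)⁻¹ *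
              volume (digitProdSuperlevel n (T / (a + 2))) :=
            volume_image_inv_natCast_add_le a fun _ hx => hx.1
        _ ≤ ENNReal.ofReal (((a : ℝ) + 1) ^ 2)⁻¹ *
              ENNReal.ofReal (C ^ n * (T / (a + 2)) ^ (-s)) := by
            gcongr; exact ih (by positivity)
        _ = _ := by
            rw [← ENNReal.ofReal_mul (by positivity), Real.div_rpow hT.le ha.le,
              Real.rpow_neg ha.le]
            congr 1
            field_simp
    calc volume (digitProdSuperlevel (n + 1) T)
        ≤ ∑' a : ℕ, volume ((fun y : ℝ => (a + 1 + y)⁻¹) '' digitProdSuperlevel n (T / (a + 2))) :=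
          (measure_mono (digitProdSuperlevel_succ_subset n T)).trans (measure_iUnion_le _)
      _ ≤ ∑' a : ℕ, ENNReal.ofReal (C ^ n * T ^ (-s) * (((a : ℝ) + 2) ^ s / ((a : ℝ) + 1) ^ 2)) :=
          ENNReal.tsum_le_tsum term_le
      _ = ENNReal.ofReal (C ^ (n + 1) * T ^ (-s)) := by
          rw [← ENNReal.ofReal_tsum_of_nonneg
            (fun a => mul_nonneg (by positivity) (by positivity))
            ((summable_digitWeight hs1).mul_left _), tsum_mul_left, ← digitWeightSum, pow_succ,
            mul_right_comm]

theorem setOf_le_cfDen_subset_digitProdSuperlevel (n : ℕ) (T : ℝ) :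
    {x : ℝ | x ∈ Set.Icc 0 1 ∧ Irrational x ∧ T ≤ cfDen x n} ⊆ digitProdSuperlevel n T := by
  rintro x ⟨⟨hx0, hx1⟩, hx, hT⟩
  have h0 : x ∈ Set.Ioo 0 1 :=
    ⟨hx0.lt_of_ne' hx.ne_zero, hx1.lt_of_ne (by simpa using hx.ne_one)⟩
  exact ⟨h0, hx, hT.trans (cfDen_le_cfDigitProd hx h0 n)⟩

/-- Equivalent to `C ^ n * K ^ (1/8) ≤ exp (3 B n / 8)`, which follows from `C ^ n ≤ exp (B n / 4)`
and `K ≤ exp (B n)`. -/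
theorem pow_mul_rpow_neg_seven_eighths_le {C B K : ℝ} {n : ℕ} (hC : 0 < C)
    (hB : 4 * Real.log C ≤ B) (hK1 : 1 ≤ K) (hK : K ≤ Real.exp (B * n)) :
    C ^ n * (K * Real.exp (B * n)) ^ (-(7 / 8) : ℝ) ≤ Real.exp (-B * n / 2) / K := by
  obtain ⟨c, rfl⟩ : ∃ c, C = Real.exp c := ⟨Real.log C, (Real.exp_log hC).symm⟩
  obtain ⟨L, rfl⟩ : ∃ L, K = Real.exp L := ⟨Real.log K, (Real.exp_log (by linarith)).symm⟩
  rw [Real.log_exp] at hB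
  rw [Real.one_le_exp_iff] at hK1
  rw [Real.exp_le_exp] at hK
  rw [← Real.exp_nat_mul, ← Real.exp_add, ← Real.exp_mul, ← Real.exp_add, ← Real.exp_sub,
    Real.exp_le_exp]
  nlinarith [mul_le_mul_of_nonneg_left hB (Nat.cast_nonneg n : (0 : ℝ) ≤ n)]

theorem measure_large_cfDen_single :
    ∃ B₀ > (0 : ℝ), ∃ C > (0 : ℝ), ∀ B : ℝ, B₀ ≤ B → ∀ n : ℕ, 1 ≤ n →
      ∀ K : ℝ, 1 ≤ K → K ≤ Real.exp (B * n) →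
        volume {x : ℝ | x ∈ Set.Icc (0 : ℝ) 1 ∧ Irrational x ∧
            cfDen x n ≥ K * Real.exp (B * n)}
          ≤ ENNReal.ofReal (C * Real.exp (-B * n / 2) / K) := by
  have hC : 0 < digitWeightSum (7 / 8) := digitWeightSum_pos (by norm_num)
  refine ⟨max 1 (4 * Real.log (digitWeightSum (7 / 8))), by positivity, 1, one_pos,
    fun B hB n _ K hK1 hK => ?_⟩
  have hT : 0 < K * Real.exp (B * n) := mul_pos (by linarith) (Real.exp_pos _)
  calc _ ≤ volume (digitProdSuperlevel n (K * Real.exp (B * n))) :=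
        measure_mono (setOf_le_cfDen_subset_digitProdSuperlevel n _)
    _ ≤ ENNReal.ofReal (digitWeightSum (7 / 8) ^ n * (K * Real.exp (B * n)) ^ (-(7 / 8) : ℝ)) :=
        volume_digitProdSuperlevel_le (by norm_num) (by norm_num) n hT
    _ ≤ ENNReal.ofReal (1 * Real.exp (-B * n / 2) / K) := by
        rw [one_mul]
        exact ENNReal.ofReal_le_ofReal (pow_mul_rpow_neg_seven_eighths_le hC
          ((le_max_right _ _).trans hB) hK1 hK)
end

section
/- There exist constants δ > 0 and C > 0 such that for every real K ≥ 1, the Lebesgue measure of the set { x ∈ [0,1] : x is irrational and S(x) > K } is at most C·e^{−δ K}. -/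
/-!
If `S(x) > K`, then, since `∑ₙ (K/4)(3/4)ⁿ = K`, some term satisfies `log v_{n+1} > t v_n` with
`t = (K/4)(3/4)ⁿ`. As `v_{n+1} ≤ 2 a_{n+1} v_n` and `v_n ≥ F_{n+1} ≥ (2/3)(3/2)ⁿ`, this forces the
partial quotient `a_{n+1}` above a threshold of size `t · exp (K (9/8)ⁿ / 12)`. The set where
`a_{n+1} > m` has measure at most `2ⁿ / m`, because the inverse branches `y ↦ 1 / (y + k)` of the
Gauss map are `1/k²`-Lipschitz and `∑ 1/k² ≤ 2`. The doubly exponential thresholds beat `2ⁿ`, and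
summing over `n` leaves `e^{-K/24}` times a convergent series.
-/

open Filter MeasureTheory

open Set Real GenContFract Topology

lemma Irrational.fract_mem_Ioo {x : ℝ} (h : Irrational x) : Int.fract x ∈ Ioo 0 1 :=
  ⟨(Int.fract_nonneg x).lt_of_ne fun h0 => h.ne_int ⌊x⌋ (by linarith [Int.self_sub_floor x]),
    Int.fract_lt_one x⟩

lemma Irrational.mem_Ioo_of_mem_Icc {x : ℝ} (h : Irrational x) (hx : x ∈ Icc 0 1) :
    x ∈ Ioo 0 1 :=
  ⟨hx.1.lt_of_ne h.ne_zero.symm, hx.2.lt_of_ne h.ne_one⟩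

lemma Irrational.not_terminatedAt {x : ℝ} (h : Irrational x) (n : ℕ) :
    ¬(GenContFract.of x).TerminatedAt n := fun ht => h <| by
  obtain ⟨q, hq⟩ := (terminates_iff_rat x).1 ⟨n, ht⟩
  exact ⟨q, hq.symm⟩

lemma Irrational.exists_stream_succ_eq_some {x : ℝ} (h : Irrational x) (n : ℕ) :
    ∃ p, IntFractPair.stream x (n + 1) = some p :=
  Option.ne_none_iff_exists'.1 <|
    mt of_terminatedAt_n_iff_succ_nth_intFractPair_stream_eq_none.2 (h.not_terminatedAt n)

namespace GenContFract.IntFractPair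

variable {K : Type*} [Field K] [LinearOrder K] [IsStrictOrderedRing K] [FloorRing K]

lemma stream_fract_succ {v : K} (h : Int.fract v ≠ 0) (n : ℕ) :
    IntFractPair.stream (Int.fract v) (n + 1) = IntFractPair.stream v (n + 1) := by
  rw [stream_succ h, stream_succ (by rwa [Int.fract_fract]), Int.fract_fract]

lemma stream_succ_of_mem_Ioo {x : K} (hx : x ∈ Ioo 0 1) (n : ℕ) :
    IntFractPair.stream x (n + 1) = IntFractPair.stream x⁻¹ n := by
  have hfract : Int.fract x = x := Int.fract_eq_self.2 ⟨hx.1.le, hx.2⟩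
  rw [stream_succ (by rw [hfract]; exact hx.1.ne'), hfract]

end GenContFract.IntFractPair

lemma lipschitzOnWith_inv_add {c : ℝ} (hc : 0 < c) :
    LipschitzOnWith (c ^ 2)⁻¹.toNNReal (fun y : ℝ => (y + c)⁻¹) (Ici 0) := by
  refine LipschitzOnWith.of_dist_le' fun a ha b hb => ?_
  have ha' : 0 < a + c := by linarith [mem_Ici.1 ha]
  have hb' : 0 < b + c := by linarith [mem_Ici.1 hb]
  have hden : c ^ 2 ≤ (b + c) * (a + c) := by nlinarith [mem_Ici.1 ha, mem_Ici.1 hb]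
  rw [Real.dist_eq, Real.dist_eq, inv_sub_inv ha'.ne' hb'.ne', abs_div,
    abs_of_pos (mul_pos ha' hb'), abs_sub_comm, add_sub_add_right_eq_sub, ← div_eq_inv_mul]
  exact div_le_div_of_nonneg_left (abs_nonneg _) (by positivity) (by linarith)

lemma volume_image_le_of_lipschitzOnWith {f : ℝ → ℝ} {K : NNReal} {s : Set ℝ}
    (hf : LipschitzOnWith K f s) : volume (f '' s) ≤ K * volume s := by
  simpa [hausdorffMeasure_real] using hf.hausdorffMeasure_image_le zero_le_one

lemma tsum_ofReal_inv_succ_sq_le_two : ∑' k : ℕ, ENNReal.ofReal (((k : ℝ) + 1) ^ 2)⁻¹ ≤ 2 := by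
  have hsum : HasSum (fun k : ℕ => (((k : ℝ) + 1) ^ 2)⁻¹) (π ^ 2 / 6) := by
    simpa using (hasSum_nat_add_iff' 1).2 hasSum_zeta_two
  rw [← ENNReal.ofReal_tsum_of_nonneg (fun k => by positivity) hsum.summable, hsum.tsum_eq,
    ← ENNReal.ofReal_ofNat]
  exact ENNReal.ofReal_le_ofReal (by nlinarith [pi_lt_d2, pi_pos])

/-- `x ∈ largeDigitSet n m` says that the partial quotient `a_{n+1}` of `x`, which is the
`b`-component of `IntFractPair.stream x (n + 1)`, exceeds `m`. -/
def largeDigitSet (n : ℕ) (m : ℝ) : Set ℝ :=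
  {x | x ∈ Ioo 0 1 ∧ Irrational x ∧
    ∃ p : IntFractPair ℝ, IntFractPair.stream x (n + 1) = some p ∧ m < p.b}

lemma largeDigitSet_zero_subset {m : ℝ} (hm : 0 < m) : largeDigitSet 0 m ⊆ Ioo 0 m⁻¹ := by
  rintro x ⟨hx, -, p, hp, hmp⟩
  rw [IntFractPair.stream_succ_of_mem_Ioo hx, IntFractPair.stream_zero, Option.some_inj] at hp
  subst hp
  have hm_lt : m < x⁻¹ := hmp.trans_le (Int.floor_le _)
  exact ⟨hx.1, by simpa using inv_strictAnti₀ hm hm_lt⟩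

lemma largeDigitSet_succ_subset (n : ℕ) (m : ℝ) :
    largeDigitSet (n + 1) m ⊆ ⋃ k : ℕ, (fun y : ℝ => (y + (k + 1))⁻¹) '' largeDigitSet n m := by
  rintro x ⟨hx, hirr, p, hp, hmp⟩
  have hfract := hirr.inv.fract_mem_Ioo
  have hshift : IntFractPair.stream x (n + 2) = IntFractPair.stream (Int.fract x⁻¹) (n + 1) := by
    rw [IntFractPair.stream_succ_of_mem_Ioo hx,
      IntFractPair.stream_fract_succ hfract.1.ne']
  have hfloor : 1 ≤ ⌊x⁻¹⌋ := Int.le_floor.2 (by simpa using one_le_inv₀ hx.1 |>.2 hx.2.le)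
  refine mem_iUnion.2 ⟨(⌊x⁻¹⌋ - 1).toNat,
    Int.fract x⁻¹, ⟨hfract, hirr.inv.sub_intCast _, p, hshift ▸ hp, hmp⟩, ?_⟩
  have hk : (((⌊x⁻¹⌋ - 1).toNat : ℕ) : ℝ) + 1 = ⌊x⁻¹⌋ := by
    rw [← Int.cast_natCast, Int.toNat_of_nonneg (by omega)]; push_cast; ring
  show (Int.fract x⁻¹ + ((((⌊x⁻¹⌋ - 1).toNat : ℕ) : ℝ) + 1))⁻¹ = x
  rw [hk, Int.fract_add_floor, inv_inv]

lemma volume_largeDigitSet_le (n : ℕ) {m : ℝ} (hm : 0 < m) :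
    volume (largeDigitSet n m) ≤ ENNReal.ofReal (2 ^ n / m) := by
  induction n with
  | zero =>
    simpa using (measure_mono (largeDigitSet_zero_subset hm)).trans_eq (Real.volume_Ioo ..)
  | succ n ih =>
    have hbranch (k : ℕ) : volume ((fun y : ℝ => (y + (k + 1))⁻¹) '' largeDigitSet n m) ≤
        ENNReal.ofReal (((k : ℝ) + 1) ^ 2)⁻¹ * volume (largeDigitSet n m) :=
      volume_image_le_of_lipschitzOnWith <|
        (lipschitzOnWith_inv_add (by positivity)).mono fun x hx => mem_Ici.2 hx.1.1.le
    calc volume (largeDigitSet (n + 1) m)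
        ≤ ∑' k : ℕ, volume ((fun y : ℝ => (y + (k + 1))⁻¹) '' largeDigitSet n m) :=
          (measure_mono (largeDigitSet_succ_subset n m)).trans (measure_iUnion_le _)
      _ ≤ ∑' k : ℕ, ENNReal.ofReal (((k : ℝ) + 1) ^ 2)⁻¹ * volume (largeDigitSet n m) :=
          ENNReal.tsum_le_tsum hbranch
      _ = (∑' k : ℕ, ENNReal.ofReal (((k : ℝ) + 1) ^ 2)⁻¹) * volume (largeDigitSet n m) :=
          ENNReal.tsum_mul_right
      _ ≤ 2 * ENNReal.ofReal (2 ^ n / m) := mul_le_mul' tsum_ofReal_inv_succ_sq_le_two ih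
      _ = ENNReal.ofReal (2 ^ (n + 1) / m) := by
        rw [pow_succ', mul_div_assoc, ENNReal.ofReal_mul zero_le_two, ENNReal.ofReal_ofNat]

lemma two_thirds_mul_three_halves_pow_le_fib_succ (n : ℕ) :
    2 / 3 * (3 / 2 : ℝ) ^ n ≤ Nat.fib (n + 1) := by
  induction n using Nat.twoStepInduction with
  | zero => norm_num
  | one => norm_num
  | more n ih₁ ih₂ =>
    rw [Nat.fib_add_two (n := n + 1), Nat.cast_add]
    calc 2 / 3 * (3 / 2 : ℝ) ^ (n + 2)
        ≤ 2 / 3 * (3 / 2 : ℝ) ^ n + 2 / 3 * (3 / 2 : ℝ) ^ (n + 1) := by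
          rw [pow_succ, pow_succ]; nlinarith [pow_pos (by norm_num : (0 : ℝ) < 3 / 2) n]
      _ ≤ Nat.fib (n + 1) + Nat.fib (n + 1 + 1) := add_le_add ih₁ ih₂

lemma fib_succ_le_cfDen {x : ℝ} (h : Irrational x) (n : ℕ) : (Nat.fib (n + 1) : ℝ) ≤ cfDen x n :=
  succ_nth_fib_le_of_nth_den (Or.inr (h.not_terminatedAt _))

lemma one_le_cfDen {x : ℝ} (h : Irrational x) (n : ℕ) : 1 ≤ cfDen x n :=
  le_trans (by exact_mod_cast Nat.fib_pos.2 n.succ_pos) (fib_succ_le_cfDen h n)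

lemma cfDen_succ_le_s10 {x : ℝ} {n : ℕ} {p : IntFractPair ℝ}
    (hp : IntFractPair.stream x (n + 1) = some p) :
    cfDen x (n + 1) ≤ (p.b + 1) * cfDen x n := by
  have hs := get?_of_eq_some_of_succ_get?_intFractPair_stream hp
  cases n with
  | zero => rw [cfDen, cfDen, first_den_eq hs, zeroth_den_eq_one]; linarith
  | succ n =>
    have hrec : cfDen x (n + 2) = p.b * cfDen x (n + 1) + 1 * cfDen x n :=
      dens_recurrence hs rfl rfl
    have hmono : cfDen x n ≤ cfDen x (n + 1) := of_den_mono
    rw [hrec]; linarith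

lemma lt_of_exp_mul_lt_two_mul_mul {t v F a : ℝ} (ht : 0 < t) (hv : 0 < v) (hFv : F ≤ v)
    (h : exp (t * v) < 2 * a * v) : t / 4 * exp (t * F / 2) < a := by
  have hlin : t * v / 2 ≤ exp (t * v / 2) := by linarith [add_one_le_exp (t * v / 2)]
  have hmono : exp (t * F / 2) ≤ exp (t * v / 2) := exp_le_exp.2 (by nlinarith)
  have hsplit : t * v / 2 * exp (t * F / 2) ≤ exp (t * v) := calc
    _ ≤ exp (t * v / 2) * exp (t * v / 2) := mul_le_mul hlin hmono (exp_pos _).le (exp_pos _).le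
    _ = exp (t * v) := by rw [← exp_add, add_halves]
  refine lt_of_mul_lt_mul_right ?_ (by positivity : 0 ≤ 2 * v)
  linarith

/-- The bound on `a_{n+1}` forced by `log v_{n+1} > t v_n`, using `v_n ≥ (2/3)(3/2)ⁿ`. -/
noncomputable def digitThreshold (n : ℕ) (t : ℝ) : ℝ :=
  t / 4 * exp (t * (2 / 3 * (3 / 2) ^ n) / 2)

lemma mem_largeDigitSet_of_lt_log_cfDen_div {x : ℝ} (hirr : Irrational x) (hx : x ∈ Ioo 0 1)
    {n : ℕ} {t : ℝ} (ht : 0 < t) (h : t < log (cfDen x (n + 1)) / cfDen x n) :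
    x ∈ largeDigitSet n (digitThreshold n t) := by
  obtain ⟨p, hp⟩ := hirr.exists_stream_succ_eq_some n
  have hv : 0 < cfDen x n := one_pos.trans_le (one_le_cfDen hirr n)
  have hb : (1 : ℝ) ≤ p.b := by exact_mod_cast IntFractPair.one_le_succ_nth_stream_b hp
  rw [lt_div_iff₀ hv] at h
  have hexp : exp (t * cfDen x n) < 2 * p.b * cfDen x n := calc
    exp (t * cfDen x n) < cfDen x (n + 1) :=
      (exp_lt_exp.2 h).trans_eq (exp_log (one_pos.trans_le (one_le_cfDen hirr (n + 1))))
    _ ≤ (p.b + 1) * cfDen x n := cfDen_succ_le_s10 hp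
    _ ≤ 2 * p.b * cfDen x n := by nlinarith
  exact ⟨hx, hirr, p, hp, lt_of_exp_mul_lt_two_mul_mul ht hv
    ((two_thirds_mul_three_halves_pow_le_fib_succ n).trans (fib_succ_le_cfDen hirr n)) hexp⟩

lemma exists_lt_of_ofReal_lt_tsum {u w : ℕ → ℝ} {K : ℝ} (hw0 : ∀ n, 0 ≤ w n) (hw : HasSum w K)
    (h : ENNReal.ofReal K < ∑' n, ENNReal.ofReal (u n)) : ∃ n, w n < u n := by
  by_contra! hle
  refine h.not_ge ?_
  rw [← hw.tsum_eq, ENNReal.ofReal_tsum_of_nonneg hw0 hw.summable]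
  exact ENNReal.tsum_le_tsum fun n => ENNReal.ofReal_le_ofReal (hle n)

lemma setOf_ofReal_lt_tsum_subset_iUnion_largeDigitSet {K : ℝ} (hK : 0 < K) :
    {x : ℝ | x ∈ Icc 0 1 ∧ Irrational x ∧
      ENNReal.ofReal K < ∑' n : ℕ, ENNReal.ofReal (log (cfDen x (n + 1)) / cfDen x n)} ⊆
      ⋃ n, largeDigitSet n (digitThreshold n (K / 4 * (3 / 4) ^ n)) := by
  have hweights : HasSum (fun n : ℕ => K / 4 * (3 / 4) ^ n) K := by
    have hgeom :=
      (hasSum_geometric_of_lt_one (r := (3 / 4 : ℝ)) (by norm_num) (by norm_num)).mul_left (K / 4)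
    rwa [show K / 4 * (1 - 3 / 4)⁻¹ = K by norm_num] at hgeom
  rintro x ⟨hx, hirr, hS⟩
  obtain ⟨n, hn⟩ := exists_lt_of_ofReal_lt_tsum (fun n => by positivity) hweights hS
  exact mem_iUnion.2 ⟨n, mem_largeDigitSet_of_lt_log_cfDen_div hirr
    (hirr.mem_Ioo_of_mem_Icc hx) (by positivity) hn⟩

lemma summable_pow_mul_exp_neg_mul_pow {a b c : ℝ} (ha : 0 < a) (hb : 1 < b) (hc : 0 < c) :
    Summable fun n : ℕ => a ^ n * exp (-(c * b ^ n)) := by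
  refine summable_of_ratio_test_tendsto_lt_one zero_lt_one
    (Eventually.of_forall fun n => by positivity) ?_
  have hratio (n : ℕ) : ‖a ^ (n + 1) * exp (-(c * b ^ (n + 1)))‖ / ‖a ^ n * exp (-(c * b ^ n))‖
      = a * exp (-(c * (b - 1)) * b ^ n) := by
    rw [Real.norm_of_nonneg (by positivity), Real.norm_of_nonneg (by positivity),
      div_eq_iff (by positivity), pow_succ, pow_succ,
      show -(c * (b ^ n * b)) = -(c * (b - 1)) * b ^ n + -(c * b ^ n) by ring, exp_add]
    ring
  simp_rw [hratio]
  have hdecay : Tendsto (fun n : ℕ => exp (-(c * (b - 1)) * b ^ n)) atTop (𝓝 0) :=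
    tendsto_exp_atBot.comp <|
      (tendsto_pow_atTop_atTop_of_one_lt hb).const_mul_atTop_of_neg (by nlinarith)
  simpa using hdecay.const_mul a

lemma two_pow_div_digitThreshold_le {K : ℝ} (hK : 1 ≤ K) (n : ℕ) :
    2 ^ n / digitThreshold n (K / 4 * (3 / 4) ^ n) ≤
      exp (-(1 / 24) * K) * (16 * ((8 / 3) ^ n * exp (-(1 / 24 * (9 / 8) ^ n)))) := by
  set y : ℝ := (9 / 8) ^ n with hy
  have hy1 : 1 ≤ y := one_le_pow₀ (by norm_num)
  have hEq : 2 ^ n / digitThreshold n (K / 4 * (3 / 4) ^ n) =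
      16 / K * ((8 / 3) ^ n * exp (-(K / 12 * y))) := by
    have hpow : K / 4 * (3 / 4) ^ n * (2 / 3 * (3 / 2) ^ n) / 2 = K / 12 * y := by
      rw [hy, show (9 / 8 : ℝ) = 3 / 4 * (3 / 2) by norm_num, mul_pow]; ring
    rw [digitThreshold, hpow, exp_neg, show (8 / 3 : ℝ) ^ n = 2 ^ n / (3 / 4) ^ n by
      rw [← div_pow]; norm_num]
    field_simp
    norm_num
  have hexp : exp (-(K / 12 * y)) ≤ exp (-(1 / 24) * K) * exp (-(1 / 24 * y)) := by
    rw [← exp_add]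
    exact exp_le_exp.2 (by nlinarith [mul_nonneg (sub_nonneg.2 hK) (sub_nonneg.2 hy1)])
  calc 2 ^ n / digitThreshold n (K / 4 * (3 / 4) ^ n)
      = 16 / K * ((8 / 3) ^ n * exp (-(K / 12 * y))) := hEq
    _ ≤ 16 * ((8 / 3) ^ n * (exp (-(1 / 24) * K) * exp (-(1 / 24 * y)))) := by
      gcongr
      exact div_le_self (by norm_num) hK
    _ = exp (-(1 / 24) * K) * (16 * ((8 / 3) ^ n * exp (-(1 / 24 * y)))) := by ring

theorem measure_large_S :
    ∃ δ > (0 : ℝ), ∃ C > (0 : ℝ), ∀ K : ℝ, 1 ≤ K →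
      volume {x : ℝ | x ∈ Set.Icc (0 : ℝ) 1 ∧ Irrational x ∧
          (∑' n : ℕ, ENNReal.ofReal (Real.log (cfDen x (n + 1)) / cfDen x n))
            > ENNReal.ofReal K}
        ≤ ENNReal.ofReal (C * Real.exp (-δ * K)) := by
  set g : ℕ → ℝ := fun n => 16 * ((8 / 3) ^ n * exp (-(1 / 24 * (9 / 8) ^ n)))
  have hg : Summable g :=
    (summable_pow_mul_exp_neg_mul_pow (by norm_num) (by norm_num) (by norm_num)).mul_left 16
  refine ⟨1 / 24, by norm_num, ∑' n, g n, hg.tsum_pos (fun n => by positivity) 0 (by positivity),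
    fun K hK => ?_⟩
  calc _ ≤ ∑' n, volume (largeDigitSet n (digitThreshold n (K / 4 * (3 / 4) ^ n))) :=
        (measure_mono (setOf_ofReal_lt_tsum_subset_iUnion_largeDigitSet
          (zero_lt_one.trans_le hK))).trans (measure_iUnion_le _)
    _ ≤ ∑' n, ENNReal.ofReal (exp (-(1 / 24) * K) * g n) := by
        refine ENNReal.tsum_le_tsum fun n => (volume_largeDigitSet_le n ?_).trans ?_
        · rw [digitThreshold]; positivity
        · exact ENNReal.ofReal_le_ofReal (two_pow_div_digitThreshold_le hK n)
    _ = ENNReal.ofReal ((∑' n, g n) * exp (-(1 / 24) * K)) := by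
        rw [← ENNReal.ofReal_tsum_of_nonneg (fun n => by positivity) (hg.mul_left _),
          tsum_mul_left, mul_comm]
end
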